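/- arXiv:2203.10396 — 4 statements merged into one kernel-verified Lean document; each statement's English description precedes it below -/
import Mathlib

section
/- The class of finite graphs embeddable into some recursive blow-up of the 4-cycle is closed under substitution: if F_1 embeds as an induced subgraph into C_4^(ℓ_1), F_2 embeds as an induced subgraph into C_4^(ℓ_2), and v ∈ V(F_1), then the substitution F_1^(v→F_2) embeds as an induced subgraph into C_4^(ℓ_1+ℓ_2). -/
/-- The recursive blow-up of the 4-cycle of height `ℓ`: vertices are `[4]^ℓ`, and
distinct `σ, τ` are adjacent iff `σ i - τ i ≡ ±1 (mod 4)` where `i` is the first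
position at which they differ. -/
def C4blow (ℓ : ℕ) : SimpleGraph (Fin ℓ → ZMod 4) where
  Adj σ τ := ∃ i : Fin ℓ, (∀ j, j < i → σ j = τ j) ∧ (σ i - τ i = 1 ∨ σ i - τ i = 3)
  symm := by
    constructor
    rintro σ τ ⟨i, h, hd⟩
    refine ⟨i, fun j hj => (h j hj).symm, ?_⟩
    have hneg : τ i - σ i = -(σ i - τ i) := by ring
    rcases hd with h1 | h3
    · right; rw [hneg, h1]; decide
    · left; rw [hneg, h3]; decide
  loopless := by
    constructor
    rintro σ ⟨i, -, hd⟩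
    rcases hd with h | h <;> rw [sub_self] at h <;> exact absurd h (by decide)
/-- Substitution of the graph `F₂` for the vertex `v` of the graph `F₁`. -/
def subst {V₁ V₂ : Type*} (F₁ : SimpleGraph V₁) (F₂ : SimpleGraph V₂) (v : V₁) :
    SimpleGraph ({w : V₁ // w ≠ v} ⊕ V₂) where
  Adj a b :=
    match a, b with
    | Sum.inl w, Sum.inl w' => F₁.Adj w.1 w'.1
    | Sum.inl w, Sum.inr _ => F₁.Adj w.1 v
    | Sum.inr _, Sum.inl w => F₁.Adj w.1 v
    | Sum.inr u, Sum.inr u' => F₂.Adj u u'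
  symm := by
    constructor
    rintro (w | u) (w' | u') h
    · exact h.symm
    · exact h
    · exact h
    · exact h.symm
  loopless := by
    constructor
    rintro (w | u) h
    · exact F₁.loopless.irrefl _ h
    · exact F₂.loopless.irrefl _ h

/-! A vertex `w ≠ v` of `F₁` is sent to `α w` followed by a constant tail, and a vertex `u` of
`F₂` to `α v` followed by `β u`. Adjacency in `C4blow` is decided at the first coordinate where
two words differ, so two images with different `ℓ₁`-prefixes are compared as their prefixes are
in `F₁`, while images sharing the prefix `α v` are compared as their tails are in `F₂`. -/

theorem Fin.append_eq_append_iff {α : Type*} {m n : ℕ} {a b : Fin m → α}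
    {c d : Fin n → α} : Fin.append a c = Fin.append b d ↔ a = b ∧ c = d := by
  refine ⟨fun h => ⟨funext fun i => ?_, funext fun i => ?_⟩, fun ⟨rfl, rfl⟩ => rfl⟩
  · simpa using congrFun h (Fin.castAdd n i)
  · simpa using congrFun h (Fin.natAdd m i)

theorem Fin.castAdd_lt_natAdd {m n : ℕ} (i : Fin m) (j : Fin n) :
    Fin.castAdd n i < Fin.natAdd m j := by
  simp only [Fin.lt_def, Fin.val_castAdd, Fin.val_natAdd]
  omega

theorem C4blow_adj_append {m n : ℕ} {a b : Fin m → ZMod 4} {c d : Fin n → ZMod 4} :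
    (C4blow (m + n)).Adj (Fin.append a c) (Fin.append b d) ↔
      (C4blow m).Adj a b ∨ (a = b ∧ (C4blow n).Adj c d) := by
  have castAdd_lt {i j : Fin m} : Fin.castAdd n i < Fin.castAdd n j ↔ i < j :=
    (Fin.strictMono_castAdd n).lt_iff_lt
  constructor
  · rintro ⟨i, hagree, hdiff⟩
    induction i using Fin.addCases with
    | left i =>
      refine .inl ⟨i, fun j hj => ?_, by simpa only [Fin.append_left] using hdiff⟩
      simpa only [Fin.append_left] using hagree _ (castAdd_lt.2 hj)
    | right i =>
      refine .inr ⟨funext fun j => ?_, i, fun j hj => ?_, ?_⟩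
      · simpa only [Fin.append_left] using hagree _ (Fin.castAdd_lt_natAdd j i)
      · simpa only [Fin.append_right] using hagree _ ((Fin.natAdd_lt_natAdd_iff m).2 hj)
      · simpa only [Fin.append_right] using hdiff
  · rintro (⟨i, hagree, hdiff⟩ | ⟨rfl, i, hagree, hdiff⟩)
    · refine ⟨Fin.castAdd n i, fun j hj => ?_, by simpa only [Fin.append_left] using hdiff⟩
      induction j using Fin.addCases with
      | left j => simpa only [Fin.append_left] using hagree j (castAdd_lt.1 hj)
      | right j => exact absurd hj (Fin.castAdd_lt_natAdd i j).asymm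
    · refine ⟨Fin.natAdd m i, fun j hj => ?_, by simpa only [Fin.append_right] using hdiff⟩
      induction j using Fin.addCases with
      | left j => simp only [Fin.append_left]
      | right j =>
        simpa only [Fin.append_right] using hagree j ((Fin.natAdd_lt_natAdd_iff m).1 hj)

section Substitution

variable {V₁ V₂ : Type*} {F₁ : SimpleGraph V₁} {F₂ : SimpleGraph V₂}
  {ℓ₁ ℓ₂ : ℕ} (α : F₁ ↪g C4blow ℓ₁) (β : F₂ ↪g C4blow ℓ₂) (v : V₁)

def substEmbeddingFun : {w : V₁ // w ≠ v} ⊕ V₂ → Fin (ℓ₁ + ℓ₂) → ZMod 4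
  | .inl w => Fin.append (α w) 1
  | .inr u => Fin.append (α v) (β u)

theorem substEmbeddingFun_injective : Function.Injective (substEmbeddingFun α β v) := by
  rintro (w | u) (w' | u') h <;>
    simp only [substEmbeddingFun, Fin.append_eq_append_iff, α.injective.eq_iff,
      β.injective.eq_iff] at h
  · exact congrArg Sum.inl (Subtype.ext h.1)
  · exact absurd h.1 w.2
  · exact absurd h.1.symm w'.2
  · exact congrArg Sum.inr h.2

theorem C4blow_adj_substEmbeddingFun_iff {a b : {w : V₁ // w ≠ v} ⊕ V₂} :
    (C4blow (ℓ₁ + ℓ₂)).Adj (substEmbeddingFun α β v a) (substEmbeddingFun α β v b) ↔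
      (subst F₁ F₂ v).Adj a b := by
  rcases a with w | u <;> rcases b with w' | u' <;>
    simp only [substEmbeddingFun, subst, C4blow_adj_append, α.map_adj_iff, β.map_adj_iff,
      α.injective.eq_iff, SimpleGraph.irrefl, and_false, or_false]
  · simp [w.2]
  · simp [(w'.2).symm, F₁.adj_comm]
  · simp

def substEmbedding : subst F₁ F₂ v ↪g C4blow (ℓ₁ + ℓ₂) where
  toFun := substEmbeddingFun α β v
  inj' := substEmbeddingFun_injective α β v
  map_rel_iff' := C4blow_adj_substEmbeddingFun_iff α β v

end Substitution

/-- the class of induced subgraphs of recursive blow-ups of $C_4$ is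
closed under substitution. -/
theorem subst_embeds_C4blow {V₁ V₂ : Type*} (F₁ : SimpleGraph V₁) (F₂ : SimpleGraph V₂)
    (ℓ₁ ℓ₂ : ℕ) (α : F₁ ↪g C4blow ℓ₁) (β : F₂ ↪g C4blow ℓ₂) (v : V₁) :
    Nonempty (subst F₁ F₂ v ↪g C4blow (ℓ₁ + ℓ₂)) :=
  ⟨substEmbedding α β v⟩
end

section
/- Every prime graph that embeds as an induced subgraph into C_4^ℓ for some ℓ has at most 2 vertices. -/
/-!
If `M` is a module of `G` (every vertex outside `M` sees all of `M` or none of it) with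
`1 < |M| < |G|`, then `G` is the substitution of `G[M]` for a vertex of the quotient `G/M`, so
`G` is not prime. It therefore suffices to find such a module in every induced subgraph of
`C4blow ℓ` on at least three vertices, by induction on `ℓ`, looking at first coordinates. If
they all agree, drop them. If two vertices share a first coordinate, its fibre is the module.
Otherwise three distinct first coordinates in `ZMod 4` contain an antipodal pair `c, c + 2`;
since no vertex of the 4-cycle distinguishes antipodal vertices, the fibre over `{c, c + 2}` is
the module.
-/

namespace SimpleGraph

variable {V : Type*} (G : SimpleGraph V)

def IsModule (M : Set V) : Prop :=
  ∀ ⦃x⦄, x ∉ M → ∀ ⦃y⦄, y ∈ M → ∀ ⦃z⦄, z ∈ M → (G.Adj x y ↔ G.Adj x z)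

variable {G}

def Iso.substCongr {V₁ V₂ W₁ W₂ : Type*} {F₁ : SimpleGraph V₁} {F₂ : SimpleGraph V₂}
    {H₁ : SimpleGraph W₁} {H₂ : SimpleGraph W₂} (φ₁ : F₁ ≃g H₁) (φ₂ : F₂ ≃g H₂) (v : V₁) :
    subst F₁ F₂ v ≃g subst H₁ H₂ (φ₁ v) where
  toEquiv :=
    (φ₁.toEquiv.subtypeEquiv fun _ => (φ₁.injective.ne_iff (y := v)).symm).sumCongr φ₂.toEquiv
  map_rel_iff' := by
    rintro (w | u) (w' | u') <;> first | exact φ₁.map_rel_iff' | exact φ₂.map_rel_iff'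

/-- `G / M`: the vertex `none` stands for `M` and is joined like its representative `m`. -/
def quotientModule (G : SimpleGraph V) (M : Set V) (m : V) : SimpleGraph (Option ↥Mᶜ) :=
  G.comap (Option.elim · m Subtype.val)

open Classical in
noncomputable def IsModule.substIso {M : Set V} (hM : G.IsModule M) {m : V} (hm : m ∈ M) :
    subst (G.quotientModule M m) (G.induce M) none ≃g G where
  toEquiv := ((Equiv.subtypeEquivRight fun _ => Option.ne_none_iff_isSome).trans
      (Equiv.optionIsSomeEquiv _)).sumCongr (Equiv.refl _) |>.trans <|
    (Equiv.sumComm _ _).trans (Equiv.Set.sumCompl M)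
  map_rel_iff' := by
    rintro (⟨_ | w, hw⟩ | u) (⟨_ | w', hw'⟩ | u')
    all_goals first | exact absurd rfl hw | exact absurd rfl hw' | rfl | skip
    · exact hM w.2 u'.2 hm
    · exact G.adj_comm _ _ |>.trans (hM w'.2 u.2 hm)

theorem IsModule.exists_subst_iso [Fintype V] {M : Set V} (hM : G.IsModule M)
    (hMnt : M.Nontrivial) (hMne : M ≠ Set.univ) :
    ∃ (n₁ n₂ : ℕ) (F₁ : SimpleGraph (Fin n₁)) (F₂ : SimpleGraph (Fin n₂)) (v : Fin n₁),
      n₁ < Fintype.card V ∧ n₂ < Fintype.card V ∧ Nonempty (G ≃g subst F₁ F₂ v) := by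
  classical
  obtain ⟨m, hm⟩ := hMnt.nonempty
  obtain ⟨x, hx⟩ := (Set.ne_univ_iff_exists_notMem M).1 hMne
  let e₁ := Fintype.equivFin (Option ↥Mᶜ)
  let e₂ := Fintype.equivFin M
  have hcardM : 1 < Fintype.card M := Fintype.one_lt_card_iff_nontrivial.2 hMnt.coe_sort
  have hcard : Fintype.card (Option ↥Mᶜ) < Fintype.card V := by
    rw [Fintype.card_option, Fintype.card_compl_set]
    have : Fintype.card M < Fintype.card V := Fintype.card_subtype_lt hx
    omega
  exact ⟨_, _, _, _, e₁ none, hcard, Fintype.card_subtype_lt hx,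
    ⟨(hM.substIso hm).symm.trans
      ((Iso.comap e₁.symm _).symm.substCongr (Iso.comap e₂.symm _).symm none)⟩⟩

end SimpleGraph

namespace C4blow

variable {ℓ : ℕ}

theorem succ_adj_iff_of_head_ne {σ τ : Fin (ℓ + 1) → ZMod 4} (h : σ 0 ≠ τ 0) :
    (C4blow (ℓ + 1)).Adj σ τ ↔ σ 0 - τ 0 = 1 ∨ σ 0 - τ 0 = 3 := by
  constructor
  · rintro ⟨i, hlt, hd⟩
    rcases Fin.eq_zero_or_eq_succ i with rfl | ⟨k, rfl⟩
    · exact hd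
    · exact absurd (hlt 0 k.succ_pos) h
  · exact fun hd => ⟨0, fun j hj => absurd hj (Fin.not_lt_zero j), hd⟩

theorem succ_adj_iff_of_head_eq {σ τ : Fin (ℓ + 1) → ZMod 4} (h : σ 0 = τ 0) :
    (C4blow (ℓ + 1)).Adj σ τ ↔ (C4blow ℓ).Adj (Fin.tail σ) (Fin.tail τ) := by
  constructor
  · rintro ⟨i, hlt, hd⟩
    rcases Fin.eq_zero_or_eq_succ i with rfl | ⟨k, rfl⟩
    · rw [h, sub_self] at hd
      exact absurd hd (by decide)
    · exact ⟨k, fun j hj => hlt j.succ (Fin.succ_lt_succ_iff.2 hj), hd⟩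
  · rintro ⟨k, hlt, hd⟩
    refine ⟨k.succ, fun j hj => ?_, hd⟩
    rcases Fin.eq_zero_or_eq_succ j with rfl | ⟨m, rfl⟩
    · exact h
    · exact hlt m (Fin.succ_lt_succ_iff.1 hj)

variable {V : Type*} {G : SimpleGraph V}

def tailEmbedding (e : G ↪g C4blow (ℓ + 1)) {c : ZMod 4} (h : ∀ v, e v 0 = c) :
    G ↪g C4blow ℓ where
  toFun v := Fin.tail (e v)
  inj' a b hab := e.injective <| by
    rw [← Fin.cons_self_tail (e a), ← Fin.cons_self_tail (e b), h, h]
    exact congrArg _ hab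
  map_rel_iff' {a b} :=
    (succ_adj_iff_of_head_eq ((h a).trans (h b).symm)).symm.trans e.map_rel_iff

/-- `hA` says that `A` is a module of the 4-cycle on `ZMod 4`. -/
theorem isModule_preimage_head (e : G ↪g C4blow (ℓ + 1)) {A : Set (ZMod 4)}
    (hA : ∀ d ∉ A, ∀ a ∈ A, ∀ b ∈ A, (d - a = 1 ∨ d - a = 3 ↔ d - b = 1 ∨ d - b = 3)) :
    G.IsModule {x | e x 0 ∈ A} := by
  intro x hx y hy z hz
  have hxy : e x 0 ≠ e y 0 := fun h => hx (show e x 0 ∈ A from h ▸ hy)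
  have hxz : e x 0 ≠ e z 0 := fun h => hx (show e x 0 ∈ A from h ▸ hz)
  rw [← e.map_rel_iff, ← e.map_rel_iff, succ_adj_iff_of_head_ne hxy, succ_adj_iff_of_head_ne hxz]
  exact hA _ hx _ hy _ hz

theorem exists_isModule_of_head_eq (e : G ↪g C4blow (ℓ + 1)) {a b w : V} (hab : a ≠ b)
    (h : e a 0 = e b 0) (hw : e w 0 ≠ e a 0) :
    ∃ M : Set V, G.IsModule M ∧ M.Nontrivial ∧ M ≠ Set.univ :=
  ⟨{x | e x 0 ∈ ({e a 0} : Set (ZMod 4))},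
    isModule_preimage_head e (by rintro d - a rfl b rfl; rfl),
    ⟨a, rfl, b, h.symm, hab⟩, fun hM => hw (Set.eq_univ_iff_forall.1 hM w)⟩

theorem exists_isModule_of_head_eq_add_two (e : G ↪g C4blow (ℓ + 1)) {p q r : V}
    (hpq : e p 0 = e q 0 + 2) (hrp : e r 0 ≠ e p 0) (hrq : e r 0 ≠ e q 0) :
    ∃ M : Set V, G.IsModule M ∧ M.Nontrivial ∧ M ≠ Set.univ := by
  refine ⟨{x | e x 0 ∈ ({e q 0, e q 0 + 2} : Set (ZMod 4))}, isModule_preimage_head e ?_,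
    ⟨p, Or.inr hpq, q, Or.inl rfl, ?_⟩, fun hM => ?_⟩
  · generalize e q 0 = c
    simp only [Set.mem_insert_iff, Set.mem_singleton_iff]
    revert c
    decide
  · rintro rfl
    exact absurd (left_eq_add.1 hpq) (by decide)
  · rcases Set.eq_univ_iff_forall.1 hM r with h | h
    exacts [hrq h, hrp (h.trans hpq.symm)]

theorem exists_isModule_of_embedding [Fintype V] (e : G ↪g C4blow ℓ)
    (hV : 2 < Fintype.card V) :
    ∃ M : Set V, G.IsModule M ∧ M.Nontrivial ∧ M ≠ Set.univ := by
  induction ℓ with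
  | zero =>
    have : Subsingleton V := e.injective.subsingleton
    exact absurd (Fintype.card_le_one_iff_subsingleton.2 this) (by omega)
  | succ ℓ ih =>
    by_cases hinj : Function.Injective fun x => e x 0
    · obtain ⟨a, b, c, hab, hac, hbc⟩ := Fintype.two_lt_card_iff.1 hV
      have antipodal : ∀ x y z : ZMod 4, x ≠ y → x ≠ z → y ≠ z →
          x = y + 2 ∨ x = z + 2 ∨ y = z + 2 := by decide
      rcases antipodal _ _ _ (hinj.ne hab) (hinj.ne hac) (hinj.ne hbc) with h | h | h
      · exact exists_isModule_of_head_eq_add_two e h (hinj.ne hac.symm) (hinj.ne hbc.symm)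
      · exact exists_isModule_of_head_eq_add_two e h (hinj.ne hab.symm) (hinj.ne hbc)
      · exact exists_isModule_of_head_eq_add_two e h (hinj.ne hab) (hinj.ne hac)
    · obtain ⟨a, b, h, hab⟩ := Function.not_injective_iff.1 hinj
      by_cases hconst : ∀ w, e w 0 = e a 0
      · exact ih (tailEmbedding e hconst)
      · obtain ⟨w, hw⟩ := not_forall.1 hconst
        exact exists_isModule_of_head_eq e hab h hw

end C4blow

/-- every prime graph embeddable into some `C4blow ℓ` has at most 2
vertices. -/
theorem prime_in_C4blow_small {V : Type*} [Fintype V] (G : SimpleGraph V)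
    (hprime : ¬ ∃ (n₁ n₂ : ℕ) (F₁ : SimpleGraph (Fin n₁)) (F₂ : SimpleGraph (Fin n₂))
      (v : Fin n₁), n₁ < Fintype.card V ∧ n₂ < Fintype.card V ∧
        Nonempty (G ≃g subst F₁ F₂ v))
    (ℓ : ℕ) (e : G ↪g C4blow ℓ) :
    Fintype.card V ≤ 2 := by
  by_contra! hcard
  obtain ⟨M, hM, hMnt, hMne⟩ := C4blow.exists_isModule_of_embedding e hcard
  exact hprime (hM.exists_subst_iso hMnt hMne)
end

section
/- For every n ≥ 1 there exists ℓ and distinct vertices x_1,...,x_n, y_1,...,y_n of C_4^ℓ such that: x_i is adjacent to y_j if and only if i ≤ j; the x_i are pairwise adjacent; and the y_j are pairwise non-adjacent. In particular, C_4^ℓ contains an induced half-graph of order n. -/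
/-!
Take `ℓ = n`, let `x i` be `i` twos followed by ones and `y j` be `j` twos followed by zeros.
Two such vectors first differ at the smaller of their numbers of leading twos, where the
entries are `1` and `2`, `1` and `0`, or `0` and `2`; only the last pair fails to differ by `±1`,
and it occurs exactly for `x i, y j` with `j < i`. Any two `y`'s differ by `0` or `2` everywhere.
Distinctness of all `2n` vertices is forced by the adjacency pattern itself.
-/

namespace SimpleGraph

variable {V ι : Type*} [PartialOrder ι] {G : SimpleGraph V} {x y : ι → V}

theorem injective_left_of_adj_iff_le (h : ∀ i j, G.Adj (x i) (y j) ↔ i ≤ j) :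
    Function.Injective x := by
  intro i j hij
  refine le_antisymm ((h i j).1 ?_) ((h j i).1 ?_)
  · rw [hij]; exact (h j j).2 le_rfl
  · rw [← hij]; exact (h i i).2 le_rfl

theorem injective_right_of_adj_iff_le (h : ∀ i j, G.Adj (x i) (y j) ↔ i ≤ j) :
    Function.Injective y := by
  intro i j hij
  refine le_antisymm ((h i j).1 ?_) ((h j i).1 ?_)
  · rw [← hij]; exact (h i i).2 le_rfl
  · rw [hij]; exact (h j j).2 le_rfl

theorem ne_of_adj_iff_le (h : ∀ i j, G.Adj (x i) (y j) ↔ i ≤ j)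
    (hy : ∀ i j, ¬ G.Adj (y i) (y j)) (i j : ι) : x i ≠ y j := by
  intro hij
  exact hy j i (hij ▸ (h i i).2 le_rfl)

end SimpleGraph

namespace C4blow

variable {ℓ : ℕ}

theorem adj_iff_of_eqOn_of_ne {σ τ : Fin ℓ → ZMod 4} {i : Fin ℓ}
    (hagree : ∀ k < i, σ k = τ k) (hne : σ i ≠ τ i) :
    (C4blow ℓ).Adj σ τ ↔ σ i - τ i = 1 ∨ σ i - τ i = 3 := by
  refine ⟨fun ⟨m, hpre, hd⟩ => ?_, fun hd => ⟨i, hagree, hd⟩⟩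
  obtain hmi | rfl | him := lt_trichotomy m i
  · rw [hagree m hmi, sub_self] at hd
    exact absurd hd (by decide)
  · exact hd
  · exact absurd (hpre i him) hne

theorem not_adj_of_forall_sub {σ τ : Fin ℓ → ZMod 4}
    (h : ∀ k, σ k - τ k = 0 ∨ σ k - τ k = 2) : ¬ (C4blow ℓ).Adj σ τ := by
  rintro ⟨m, -, hd⟩
  rcases h m with h | h <;> rw [h] at hd <;> revert hd <;> decide

def twosThen (i : Fin ℓ) (a : ZMod 4) : Fin ℓ → ZMod 4 :=
  fun k => if k < i then 2 else a

variable {i j k : Fin ℓ} {a b : ZMod 4}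

theorem twosThen_of_lt (hk : k < i) : twosThen i a k = 2 := if_pos hk

theorem twosThen_of_le (hk : i ≤ k) : twosThen i a k = a := if_neg (not_lt.2 hk)

theorem twosThen_eqOn_of_le (hij : i ≤ j) : ∀ k < i, twosThen i a k = twosThen j b k :=
  fun _ hk => by rw [twosThen_of_lt hk, twosThen_of_lt (hk.trans_le hij)]

theorem adj_twosThen_of_lt (hij : i < j) (ha : a ≠ 2) :
    (C4blow ℓ).Adj (twosThen i a) (twosThen j b) ↔ a - 2 = 1 ∨ a - 2 = 3 := by
  rw [adj_iff_of_eqOn_of_ne (twosThen_eqOn_of_le hij.le), twosThen_of_le le_rfl,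
    twosThen_of_lt hij]
  rwa [twosThen_of_le le_rfl, twosThen_of_lt hij]

theorem adj_twosThen_self (hab : a ≠ b) :
    (C4blow ℓ).Adj (twosThen i a) (twosThen i b) ↔ a - b = 1 ∨ a - b = 3 := by
  rw [adj_iff_of_eqOn_of_ne (twosThen_eqOn_of_le le_rfl), twosThen_of_le le_rfl,
    twosThen_of_le le_rfl]
  rwa [twosThen_of_le le_rfl, twosThen_of_le le_rfl]

theorem adj_twosThen_one_zero_iff :
    (C4blow ℓ).Adj (twosThen i 1) (twosThen j 0) ↔ i ≤ j := by
  obtain hij | rfl | hji := lt_trichotomy i j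
  · simp only [adj_twosThen_of_lt (a := 1) (b := 0) hij (by decide), hij.le, iff_true]; decide
  · simp only [adj_twosThen_self (a := 1) (b := 0) (by decide), le_rfl, iff_true]; decide
  · rw [(C4blow ℓ).adj_comm, adj_twosThen_of_lt hji (by decide)]
    simp only [not_le.2 hji, iff_false]; decide

theorem adj_twosThen_one (hij : i ≠ j) : (C4blow ℓ).Adj (twosThen i 1) (twosThen j 1) := by
  obtain hij | hji := hij.lt_or_gt
  · exact (adj_twosThen_of_lt hij (by decide)).2 (by decide)
  · exact ((adj_twosThen_of_lt hji (by decide)).2 (by decide)).symm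

theorem not_adj_twosThen_zero : ¬ (C4blow ℓ).Adj (twosThen i 0) (twosThen j 0) :=
  not_adj_of_forall_sub fun k => by
    unfold twosThen; split_ifs <;> decide

end C4blow

open C4blow in
theorem C4blow_contains_halfgraph_general (n : ℕ) :
    ∃ (ℓ : ℕ) (x y : Fin n → (Fin ℓ → ZMod 4)),
      Function.Injective x ∧ Function.Injective y ∧ (∀ i j, x i ≠ y j) ∧
      (∀ i j, (C4blow ℓ).Adj (x i) (y j) ↔ i ≤ j) ∧
      (∀ i j, i ≠ j → (C4blow ℓ).Adj (x i) (x j)) ∧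
      (∀ i j, ¬ (C4blow ℓ).Adj (y i) (y j)) := by
  have half : ∀ i j : Fin n, (C4blow n).Adj (twosThen i 1) (twosThen j 0) ↔ i ≤ j :=
    fun _ _ => adj_twosThen_one_zero_iff
  have indep : ∀ i j : Fin n, ¬ (C4blow n).Adj (twosThen i 0) (twosThen j 0) :=
    fun _ _ => not_adj_twosThen_zero
  exact ⟨n, _, _, SimpleGraph.injective_left_of_adj_iff_le half,
    SimpleGraph.injective_right_of_adj_iff_le half, SimpleGraph.ne_of_adj_iff_le half indep,
    half, fun _ _ => adj_twosThen_one, indep⟩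

/-- for every `n ≥ 1` some `C4blow ℓ` contains an induced half-graph of
order `n` whose top part is a clique and whose bottom part is an independent set. -/
theorem C4blow_contains_halfgraph (n : ℕ) (hn : 1 ≤ n) :
    ∃ (ℓ : ℕ) (x y : Fin n → (Fin ℓ → ZMod 4)),
      Function.Injective x ∧ Function.Injective y ∧ (∀ i j, x i ≠ y j) ∧
      (∀ i j, (C4blow ℓ).Adj (x i) (y j) ↔ i ≤ j) ∧
      (∀ i j, i ≠ j → (C4blow ℓ).Adj (x i) (x j)) ∧
      (∀ i j, ¬ (C4blow ℓ).Adj (y i) (y j)) :=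
  C4blow_contains_halfgraph_general n
end

section
/- Define a sequence (a_n) of nonnegative reals by a_0 = a_1 = 1 and, for n ≥ 2, a_n = (1/(4^(n-1) − 1)) · Σ_{t=1}^{n-1} binom(n,t) · a_t · a_(n-t). Then lim_{n→∞} a_n^(1/n) = 0. -/
private lemma sum_choose_Ico (n : ℕ) (hn : 2 ≤ n) :
    (∑ t ∈ Finset.Ico 1 n, n.choose t) + 2 = 2 ^ n := by
  have h := Nat.sum_range_choose n
  rw [Finset.range_eq_Ico] at h
  rw [Finset.sum_eq_sum_Ico_succ_bot (by omega : 0 < n + 1)] at h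
  rw [Finset.sum_Ico_succ_top (by omega : 1 ≤ n)] at h
  simp at h
  omega

private lemma core (a : ℕ → ℝ) (hnonneg : ∀ n, 0 ≤ a n)
    (hrec : ∀ n, 2 ≤ n → a n = (1 / ((4 : ℝ) ^ (n - 1) - 1)) *
      ∑ t ∈ Finset.Ico 1 n, (n.choose t : ℝ) * a t * a (n - t))
    (M r : ℝ) (hM : 0 ≤ M) (hr : 0 ≤ r) (n : ℕ) (hn : 2 ≤ n)
    (h : ∀ m, 1 ≤ m → m < n → a m ≤ M * r ^ m) :
    a n ≤ ((2:ℝ) ^ n - 2) / ((4:ℝ) ^ (n - 1) - 1) * (M ^ 2 * r ^ n) := by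
  have hB : (4:ℝ) ≤ (4:ℝ) ^ (n-1) := by
    calc (4:ℝ) = 4 ^ 1 := (pow_one _).symm
    _ ≤ 4 ^ (n-1) := pow_le_pow_right₀ (by norm_num) (by omega)
  have hBpos : (0:ℝ) < 4 ^ (n-1) - 1 := by linarith
  rw [hrec n hn]
  have hterm : ∀ t ∈ Finset.Ico 1 n, (n.choose t : ℝ) * a t * a (n - t)
      ≤ (n.choose t : ℝ) * (M^2 * r^n) := by
    intro t ht
    rw [Finset.mem_Ico] at ht
    have h1 : a t ≤ M * r ^ t := h t ht.1 ht.2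
    have h2 : a (n - t) ≤ M * r ^ (n - t) := h (n-t) (by omega) (by omega)
    have key : r ^ t * r ^ (n - t) = r ^ n := by
      rw [← pow_add]; congr 1; omega
    have hc : (0:ℝ) ≤ (n.choose t : ℝ) := Nat.cast_nonneg _
    have step1 : (n.choose t : ℝ) * a t * a (n - t)
        ≤ (n.choose t : ℝ) * (M * r ^ t) * (M * r ^ (n - t)) :=
      mul_le_mul (mul_le_mul_of_nonneg_left h1 hc) h2 (hnonneg _) (by positivity)
    calc (n.choose t : ℝ) * a t * a (n-t)
        ≤ (n.choose t : ℝ) * (M * r^t) * (M * r^(n-t)) := step1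
      _ = (n.choose t : ℝ) * (M^2 * (r^t * r^(n-t))) := by ring
      _ = (n.choose t : ℝ) * (M^2 * r^n) := by rw [key]
  have hcast : (∑ t ∈ Finset.Ico 1 n, (n.choose t : ℝ)) = (2:ℝ)^n - 2 := by
    have hc := sum_choose_Ico n hn
    have : ((∑ t ∈ Finset.Ico 1 n, n.choose t : ℕ) : ℝ) + 2 = (2:ℝ)^n := by
      exact_mod_cast congrArg (Nat.cast (R := ℝ)) hc
    push_cast at this
    linarith
  have hsum : ∑ t ∈ Finset.Ico 1 n, (n.choose t : ℝ) * a t * a (n - t)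
      ≤ ((2:ℝ)^n - 2) * (M^2 * r^n) := by
    calc ∑ t ∈ Finset.Ico 1 n, (n.choose t : ℝ) * a t * a (n - t)
        ≤ ∑ t ∈ Finset.Ico 1 n, (n.choose t : ℝ) * (M^2*r^n) :=
          Finset.sum_le_sum hterm
      _ = (∑ t ∈ Finset.Ico 1 n, (n.choose t : ℝ)) * (M^2*r^n) := by
          rw [← Finset.sum_mul]
      _ = ((2:ℝ)^n - 2) * (M^2*r^n) := by rw [hcast]
  calc (1 / ((4 : ℝ) ^ (n - 1) - 1)) *
        ∑ t ∈ Finset.Ico 1 n, (n.choose t : ℝ) * a t * a (n - t)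
      ≤ (1 / ((4 : ℝ) ^ (n - 1) - 1)) * (((2:ℝ)^n - 2) * (M^2 * r^n)) := by
        apply mul_le_mul_of_nonneg_left hsum (by positivity)
    _ = ((2:ℝ) ^ n - 2) / ((4:ℝ) ^ (n - 1) - 1) * (M ^ 2 * r ^ n) := by
        field_simp

section
variable (a : ℕ → ℝ) (hnonneg : ∀ n, 0 ≤ a n) (ha1 : a 1 = 1)
    (hrec : ∀ n, 2 ≤ n → a n = (1 / ((4 : ℝ) ^ (n - 1) - 1)) *
      ∑ t ∈ Finset.Ico 1 n, (n.choose t : ℝ) * a t * a (n - t))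

-- facts about 2^n, 4^(n-1)
lemma pow_facts (n : ℕ) (hn : 2 ≤ n) :
    (4:ℝ) ≤ (4:ℝ)^(n-1) ∧ (4:ℝ) ≤ (2:ℝ)^n ∧ ((2:ℝ)^n)^2 = 4 * (4:ℝ)^(n-1) := by
  refine ⟨?_, ?_, ?_⟩
  · calc (4:ℝ) = 4 ^ 1 := (pow_one _).symm
    _ ≤ 4 ^ (n-1) := pow_le_pow_right₀ (by norm_num) (by omega)
  · calc (4:ℝ) = 2 ^ 2 := by norm_num
    _ ≤ 2 ^ n := pow_le_pow_right₀ (by norm_num) hn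
  · have h1 : ((2:ℝ)^n)^2 = (4:ℝ)^n := by
      rw [← pow_mul, show (4:ℝ) = 2^2 by norm_num, ← pow_mul]
      ring_nf
    rw [h1, show (4:ℝ)^n = 4^(n-1)*4 from by rw [← pow_succ]; congr 1; omega]
    ring

include hnonneg ha1 hrec in
lemma le_one : ∀ n, 1 ≤ n → a n ≤ 1 := by
  intro n
  induction n using Nat.strong_induction_on with
  | _ n ih =>
    intro hn
    rcases eq_or_lt_of_le hn with h1 | h2
    · rw [← h1, ha1]
    · obtain ⟨hB, hA, hAB⟩ := pow_facts n h2
      have hkey := core a hnonneg hrec 1 1 zero_le_one zero_le_one n h2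
        (fun m hm1 hmn => by simpa using ih m hmn hm1)
      simp only [one_pow, mul_one] at hkey
      have : ((2:ℝ)^n - 2) / ((4:ℝ)^(n-1) - 1) ≤ 1 := by
        rw [div_le_one (by linarith)]
        nlinarith
      linarith
include hnonneg ha1 hrec in
lemma improve (M r : ℝ) (hM : 1 ≤ M) (hr : 0 < r) (hr1 : r ≤ 1)
    (h : ∀ m, 1 ≤ m → a m ≤ M * r ^ m) :
    ∀ n, 1 ≤ n → a n ≤ (6 * M ^ 2 / r) * (r / 2) ^ n := by
  intro n hn
  rcases eq_or_lt_of_le hn with h1 | h2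
  · rw [← h1, ha1, pow_one]
    have he : 6 * M ^ 2 / r * (r / 2) = 3 * M ^ 2 := by
      field_simp; ring
    rw [he]; nlinarith
  · obtain ⟨hB, hA, hAB⟩ := pow_facts n h2
    have hkey := core a hnonneg hrec M r (by linarith) hr.le n h2
      (fun m hm1 _ => h m hm1)
    have hineq : ((2:ℝ)^n - 2) / ((4:ℝ)^(n-1) - 1) ≤ 6 / (r * 2^n) := by
      rw [div_le_div_iff₀ (by linarith) (by positivity)]
      have e1 : ((2:ℝ)^n - 2) * (r * 2^n) ≤ ((2:ℝ)^n - 2) * 2^n := by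
        apply mul_le_mul_of_nonneg_left _ (by linarith)
        nlinarith
      nlinarith
    have hrn : (0:ℝ) ≤ M^2 * r^n := by positivity
    calc a n ≤ ((2:ℝ)^n - 2) / ((4:ℝ)^(n-1) - 1) * (M^2 * r^n) := hkey
      _ ≤ 6 / (r * 2^n) * (M^2 * r^n) := mul_le_mul_of_nonneg_right hineq hrn
      _ = (6 * M ^ 2 / r) * (r / 2) ^ n := by
          rw [div_pow]
          field_simp

include hnonneg ha1 hrec in
lemma family : ∀ k : ℕ, ∃ M : ℝ, 1 ≤ M ∧ ∀ n, 1 ≤ n → a n ≤ M * ((1/2:ℝ)^k)^n := by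
  intro k
  induction k with
  | zero =>
    exact ⟨1, le_refl 1, fun n hn => by
      simpa using le_one a hnonneg ha1 hrec n hn⟩
  | succ k ihk =>
    obtain ⟨M, hM1, hMb⟩ := ihk
    have hr : (0:ℝ) < (1/2:ℝ)^k := by positivity
    have hr1 : ((1/2:ℝ))^k ≤ 1 := pow_le_one₀ (by norm_num) (by norm_num)
    refine ⟨6 * M^2 / ((1/2:ℝ)^k), ?_, ?_⟩
    · rw [le_div_iff₀ hr]
      nlinarith
    · intro n hn
      have := improve a hnonneg ha1 hrec M ((1/2:ℝ)^k) hM1 hr hr1 hMb n hn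
      convert this using 3
      rw [pow_succ]
      ring
end

/-- the sequence given by `a 0 = a 1 = 1` and
`a n = (1/(4^(n-1) - 1)) * ∑_{t=1}^{n-1} C(n,t) a t a (n-t)` for `n ≥ 2`
satisfies `a n ^ (1/n) → 0`. -/
theorem clique_density_superexponential (a : ℕ → ℝ)
    (hnonneg : ∀ n, 0 ≤ a n) (ha0 : a 0 = 1) (ha1 : a 1 = 1)
    (hrec : ∀ n, 2 ≤ n → a n = (1 / ((4 : ℝ) ^ (n - 1) - 1)) *
      ∑ t ∈ Finset.Ico 1 n, (n.choose t : ℝ) * a t * a (n - t)) :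
    Filter.Tendsto (fun n : ℕ => a n ^ ((n : ℝ)⁻¹)) Filter.atTop (nhds 0) := by
  rw [Metric.tendsto_atTop]
  intro ε hε
  obtain ⟨k, hk⟩ : ∃ k : ℕ, (1/2:ℝ)^k < ε/2 :=
    exists_pow_lt_of_lt_one (by linarith) (by norm_num)
  obtain ⟨M, hM1, hMb⟩ := family a hnonneg ha1 hrec k
  obtain ⟨N, hN⟩ : ∃ N : ℕ, M < (2:ℝ)^N := pow_unbounded_of_one_lt M (by norm_num)
  refine ⟨max N 1, fun n hn => ?_⟩
  have hn1 : 1 ≤ n := le_trans (le_max_right _ _) hn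
  have hnN : N ≤ n := le_trans (le_max_left _ _) hn
  rw [Real.dist_eq, sub_zero, abs_of_nonneg (Real.rpow_nonneg (hnonneg n) _)]
  have h2 : a n ^ ((n:ℝ)⁻¹) ≤ (M * ((1/2:ℝ)^k)^n) ^ ((n:ℝ)⁻¹) :=
    Real.rpow_le_rpow (hnonneg n) (hMb n hn1) (by positivity)
  have h3 : (M * ((1/2:ℝ)^k)^n) ^ ((n:ℝ)⁻¹) = M ^ ((n:ℝ)⁻¹) * (1/2:ℝ)^k := by
    rw [Real.mul_rpow (by linarith) (by positivity),
      Real.pow_rpow_inv_natCast (by positivity) (by omega)]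
  have h4 : M ^ ((n:ℝ)⁻¹) ≤ 2 := by
    calc M ^ ((n:ℝ)⁻¹) ≤ ((2:ℝ)^n) ^ ((n:ℝ)⁻¹) :=
          Real.rpow_le_rpow (by linarith)
            (le_trans hN.le (pow_le_pow_right₀ one_le_two hnN)) (by positivity)
      _ = 2 := Real.pow_rpow_inv_natCast (by norm_num) (by omega)
  have hq : (0:ℝ) ≤ (1/2:ℝ)^k := by positivity
  calc a n ^ ((n:ℝ)⁻¹) ≤ M ^ ((n:ℝ)⁻¹) * (1/2:ℝ)^k := by rw [← h3]; exact h2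
    _ ≤ 2 * (1/2:ℝ)^k := mul_le_mul_of_nonneg_right h4 hq
    _ < ε := by linarith
end
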